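/- Let B be the symmetric ℝ/ℤ-valued pairing on A = (ℤ/4) × (ℤ/4) given by B((n₁,n₂),(m₁,m₂)) = (n₁m₂ + n₂m₁)/4 (mod 1). For every quadratic refinement Q of B with Q(0) = 0, the Gauss sum G(Q) is nonzero and the Arf invariant of Q is a multiple of 1/4, i.e., lies in {0, 1/4, 1/2, 3/4} ⊂ ℝ/ℤ. -/

import Mathlib

open scoped BigOperators

/-- The representative in `[0,1)` of an element of `ℝ/ℤ`. -/
noncomputable def rep (x : AddCircle (1 : ℝ)) : ℝ :=
  (AddCircle.equivIco (1 : ℝ) 0 x).1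

/-- The Gauss sum `G(Q) = Σ_{a ∈ A} exp(2πi·Q̃(a))` of an `ℝ/ℤ`-valued function `Q`
on a finite type, where `Q̃(a) ∈ [0,1)` is the representative of `Q(a)`. -/
noncomputable def gaussSumQ {A : Type*} [Fintype A] (Q : A → AddCircle (1 : ℝ)) : ℂ :=
  ∑ a, Complex.exp (2 * (Real.pi : ℂ) * Complex.I * (rep (Q a) : ℂ))

/-- The Arf invariant `(1/2π)·arg G(Q) ∈ ℝ/ℤ` of `Q` (meaningful when `G(Q) ≠ 0`). -/
noncomputable def arf {A : Type*} [Fintype A] (Q : A → AddCircle (1 : ℝ)) :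
    AddCircle (1 : ℝ) :=
  ((Complex.arg (gaussSumQ Q) / (2 * Real.pi) : ℝ) : AddCircle (1 : ℝ))

/-- The torsion linking pairing on `(ℤ/4) × (ℤ/4)`:
`B((n₁,n₂),(m₁,m₂)) = (n₁m₂ + n₂m₁)/4 (mod 1)`. -/
noncomputable def Bpair (v w : ZMod 4 × ZMod 4) : AddCircle (1 : ℝ) :=
  ((((v.1.val * w.2.val + v.2.val * w.1.val : ℕ) : ℝ) / 4 : ℝ) : AddCircle (1 : ℝ))

/-!
A quadratic refinement `Q` of the hyperbolic pairing `(x, y)·(x', y') = (xy' + yx')/N` on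
`(ℤ/N)²` with `Q(0) = 0` restricts to a homomorphism on each axis, so
`Q(x, y) = (ax + by + xy)/N` for some `a, b`. In the Gauss sum the inner sum over `y` is a
character sum of `y ↦ y(b + x)/N`, which vanishes unless `x = -b`; hence `G(Q) = N·e(-ab/N)`,
and the Arf invariant is `-ab/N`.
-/

open Complex Real ZMod

theorem exp_two_pi_I_rep (x : UnitAddCircle) :
    exp (2 * π * I * rep x) = AddCircle.toCircle x := by
  have hx : ((rep x : ℝ) : UnitAddCircle) = x := (AddCircle.equivIco 1 0).symm_apply_apply x
  conv_rhs => rw [← hx]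
  rw [AddCircle.toCircle_apply_mk, Circle.coe_exp]
  push_cast
  ring_nf

theorem gaussSumQ_eq_sum_toCircle {A : Type*} [Fintype A] (Q : A → UnitAddCircle) :
    gaussSumQ Q = ∑ a, (AddCircle.toCircle (Q a) : ℂ) := by
  simp only [gaussSumQ, exp_two_pi_I_rep]

theorem coe_arg_toCircle_div_two_pi (t : UnitAddCircle) :
    ((arg (AddCircle.toCircle t) / (2 * π) : ℝ) : UnitAddCircle) = t := by
  apply AddCircle.injective_toCircle one_ne_zero
  rw [AddCircle.toCircle_apply_mk, div_one, mul_div_cancel₀ _ Real.two_pi_pos.ne', Circle.exp_arg]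

def IsQuadraticRefinement {A : Type*} [AddGroup A] (Q : A → UnitAddCircle)
    (B : A → A → UnitAddCircle) : Prop :=
  ∀ v w, Q (v + w) - Q v - Q w + Q 0 = B v w

theorem IsQuadraticRefinement.apply_add {A : Type*} [AddGroup A] {Q : A → UnitAddCircle}
    {B : A → A → UnitAddCircle} (hQ : IsQuadraticRefinement Q B) (hQ0 : Q 0 = 0) (v w : A) :
    Q (v + w) = Q v + Q w + B v w := by
  rw [← hQ v w, hQ0]
  abel

noncomputable def hyperbolicPairing (N : ℕ) [NeZero N] (v w : ZMod N × ZMod N) :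
    UnitAddCircle :=
  toAddCircle (v.1 * w.2 + v.2 * w.1)

section

variable {N : ℕ} [NeZero N]

theorem exists_toAddCircle_eq_of_nsmul_eq_zero {t : UnitAddCircle} (h : N • t = 0) :
    ∃ a : ZMod N, toAddCircle a = t := by
  obtain ⟨m, -, rfl⟩ := (AddCircle.nsmul_eq_zero_iff (NeZero.pos N)).mp h
  exact ⟨m, by simp [toAddCircle_natCast]⟩

theorem AddMonoidHom.exists_eq_toAddCircle_mul (f : ZMod N →+ UnitAddCircle) :
    ∃ a : ZMod N, ∀ x, f x = toAddCircle (a * x) := by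
  have hf : N • f 1 = 0 := by rw [← map_nsmul, nsmul_one, natCast_self, map_zero]
  obtain ⟨a, ha⟩ := exists_toAddCircle_eq_of_nsmul_eq_zero hf
  refine ⟨a, fun x => ?_⟩
  calc f x = f (x.val • 1) := by rw [nsmul_one, natCast_zmod_val]
    _ = x.val • toAddCircle a := by rw [map_nsmul, ha]
    _ = toAddCircle (a * x) := by rw [← map_nsmul, nsmul_eq_mul, natCast_zmod_val, mul_comm]

theorem IsQuadraticRefinement.exists_eq_toAddCircle {Q : ZMod N × ZMod N → UnitAddCircle}
    (hQ : IsQuadraticRefinement Q (hyperbolicPairing N)) (hQ0 : Q 0 = 0) :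
    ∃ a b : ZMod N, Q = fun v => toAddCircle (a * v.1 + b * v.2 + v.1 * v.2) := by
  have hQx : ∀ x x' : ZMod N, Q (x + x', 0) = Q (x, 0) + Q (x', 0) := fun x x' => by
    simpa [hyperbolicPairing] using hQ.apply_add hQ0 (x, 0) (x', 0)
  have hQy : ∀ y y' : ZMod N, Q (0, y + y') = Q (0, y) + Q (0, y') := fun y y' => by
    simpa [hyperbolicPairing] using hQ.apply_add hQ0 (0, y) (0, y')
  obtain ⟨a, ha⟩ := (AddMonoidHom.mk' (fun x => Q (x, 0)) hQx).exists_eq_toAddCircle_mul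
  obtain ⟨b, hb⟩ := (AddMonoidHom.mk' (fun y => Q (0, y)) hQy).exists_eq_toAddCircle_mul
  simp only [AddMonoidHom.mk'_apply] at ha hb
  refine ⟨a, b, funext fun ⟨x, y⟩ => ?_⟩
  have hxy := hQ.apply_add hQ0 (x, 0) (0, y)
  simp only [Prod.mk_add_mk, add_zero, zero_add, hyperbolicPairing, mul_zero] at hxy
  rw [hxy, ha, hb, map_add, map_add]

theorem sum_stdAddChar_hyperbolic (a b : ZMod N) :
    ∑ x : ZMod N, ∑ y : ZMod N, stdAddChar (a * x + b * y + x * y) =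
      N * stdAddChar (-(a * b)) := by
  classical
  have inner (x : ZMod N) :
      ∑ y : ZMod N, stdAddChar (y * (b + x)) = if b + x = 0 then (N : ℂ) else 0 := by
    simpa using AddChar.sum_mulShift (b + x) (isPrimitive_stdAddChar N)
  calc ∑ x : ZMod N, ∑ y : ZMod N, stdAddChar (a * x + b * y + x * y)
      = ∑ x : ZMod N, stdAddChar (a * x) * ∑ y : ZMod N, stdAddChar (y * (b + x)) := by
        simp only [Finset.mul_sum, ← AddChar.map_add_eq_mul]
        congr! 3
        ring
    _ = N * stdAddChar (-(a * b)) := by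
        simp only [inner, mul_ite, mul_zero, add_eq_zero_iff_eq_neg']
        rw [Finset.sum_ite_eq']
        simp [mul_comm]

theorem gaussSumQ_hyperbolic (a b : ZMod N) :
    gaussSumQ (fun v : ZMod N × ZMod N => toAddCircle (a * v.1 + b * v.2 + v.1 * v.2)) =
      N * stdAddChar (-(a * b)) := by
  rw [gaussSumQ_eq_sum_toCircle, Fintype.sum_prod_type, ← sum_stdAddChar_hyperbolic]
  rfl

theorem IsQuadraticRefinement.exists_gaussSumQ_eq {Q : ZMod N × ZMod N → UnitAddCircle}
    (hQ : IsQuadraticRefinement Q (hyperbolicPairing N)) (hQ0 : Q 0 = 0) :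
    ∃ j : ZMod N, gaussSumQ Q = N * stdAddChar j := by
  obtain ⟨a, b, rfl⟩ := hQ.exists_eq_toAddCircle hQ0
  exact ⟨_, gaussSumQ_hyperbolic a b⟩

theorem arf_eq_of_gaussSumQ_eq {A : Type*} [Fintype A] {Q : A → UnitAddCircle} {j : ZMod N}
    (h : gaussSumQ Q = N * stdAddChar j) : arf Q = toAddCircle j := by
  rw [arf, h, ← ofReal_natCast, arg_real_mul _ (Nat.cast_pos.mpr (NeZero.pos N)),
    stdAddChar_apply]
  exact coe_arg_toCircle_div_two_pi _

end

theorem Bpair_eq_hyperbolicPairing : Bpair = hyperbolicPairing 4 := by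
  funext v w
  have h := toAddCircle_natCast (N := 4) (v.1.val * w.2.val + v.2.val * w.1.val)
  push_cast [natCast_zmod_val] at h
  rw [Bpair, hyperbolicPairing, h]
  push_cast
  rfl

theorem toAddCircle_mem_quarters (j : ZMod 4) :
    toAddCircle j ∈ ({((0 : ℝ) : UnitAddCircle), ((1/4 : ℝ) : UnitAddCircle),
      ((1/2 : ℝ) : UnitAddCircle), ((3/4 : ℝ) : UnitAddCircle)} : Set UnitAddCircle) := by
  rw [toAddCircle_apply]
  fin_cases j <;> norm_num [ZMod.val]

theorem arf_multiple_of_quarter_Q4 :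
    ∀ Q : ZMod 4 × ZMod 4 → AddCircle (1 : ℝ),
      (∀ v w, Q (v + w) - Q v - Q w + Q 0 = Bpair v w) →
      Q 0 = 0 →
      gaussSumQ Q ≠ 0 ∧
      arf Q ∈ ({((0 : ℝ) : AddCircle (1 : ℝ)), ((1/4 : ℝ) : AddCircle (1 : ℝ)),
        ((1/2 : ℝ) : AddCircle (1 : ℝ)), ((3/4 : ℝ) : AddCircle (1 : ℝ))} :
          Set (AddCircle (1 : ℝ))) := by
  intro Q hQ hQ0
  rw [Bpair_eq_hyperbolicPairing] at hQ
  obtain ⟨j, hj⟩ := IsQuadraticRefinement.exists_gaussSumQ_eq hQ hQ0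
  refine ⟨?_, arf_eq_of_gaussSumQ_eq hj ▸ toAddCircle_mem_quarters j⟩
  rw [hj]
  exact mul_ne_zero (by norm_num) (Circle.coe_ne_zero _)
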